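/- For every integer n ≥ 2, a_n = ∑_{k=1}^{n-1} C(n-2, k-1) · ((k-1)! - a_k) · a_{n-k}, where a_n = ∑_{k=1}^{n} (-1)^(k-1) (k-1)! c(n,k) and c(n,k) is the unsigned Stirling number of the first kind. -/

import Mathlib

/-- The number of cycles (orbits, including fixed points) of a permutation. -/
noncomputable def cycleCount {n : ℕ} (σ : Equiv.Perm (Fin n)) : ℕ :=
  Nat.card (Quotient (MulAction.orbitRel (Subgroup.zpowers σ) (Fin n)))

/-- The unsigned Stirling number of the first kind: the number of permutations of an
`n`-element set with exactly `k` cycles. -/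
noncomputable def stirling1 (n k : ℕ) : ℕ :=
  Nat.card {σ : Equiv.Perm (Fin n) // cycleCount σ = k}

/-- `a n = ∑_{k=1}^n (-1)^(k-1) (k-1)! c(n,k)`. -/
noncomputable def a (n : ℕ) : ℤ :=
  ∑ k ∈ Finset.Icc 1 n, (-1 : ℤ) ^ (k - 1) * (Nat.factorial (k - 1) : ℤ) * (stirling1 n k : ℤ)

/-!
Inserting the point `0` into a permutation of `Fin n` (`Equiv.Perm.decomposeFin`) either adds
`0` as a fixed point or splices it into an existing cycle, which gives
`c(n+1,k+1) = n c(n,k+1) + c(n,k)`; so `stirling1` is Mathlib's `Nat.stirlingFirst`.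

Then `a (n+1) = ψₙ(1)` for `ψₙ = aPoly n = ∑ₖ (-1)^k k! c(n+1,k+1) X^(k+1)`, and the Stirling
recurrence says `ψ₀ = X`, `ψₙ₊₁ = (n+1) ψₙ - θ ψₙ` for the derivation `θ = X² d/dX`. For the exponential
generating function `Ψ = ∑ ψₙ tⁿ/n!` the theorem is the Riccati equation `Ψ' = Ψ/(1-t) - Ψ²`,
i.e. `ψₙ₊₁ + ∑ C(n,j) ψⱼ ψₙ₋ⱼ = ∑ C(n,j) j! ψₙ₋ⱼ`. Since `θ` is a derivation, binomial
convolutions of solutions of such first-order recurrences are again solutions, so both sides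
satisfy `Fₙ₊₁ = (n+2) Fₙ - θ Fₙ`; they agree at `n = 0` because `θ X = X²`. Evaluating at
`X = 1` gives the theorem.
-/

open Equiv Equiv.Perm Finset
open scoped Nat

namespace Equiv.Perm

variable {α β : Type*} {σ : Perm α} {τ : Perm β} {x y : α}

theorem SameCycle.map_of_forall {f : α → β} (hf : ∀ z, τ.SameCycle (f z) (f (σ z)))
    (h : σ.SameCycle x y) : τ.SameCycle (f x) (f y) := by
  obtain ⟨i, rfl⟩ := h
  induction i using Int.induction_on with
  | zero => exact .rfl
  | succ i ih =>
    have step := hf ((σ ^ (i : ℤ)) x)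
    rw [← mul_apply, ← zpow_one_add, add_comm] at step
    exact ih.trans step
  | pred i ih =>
    have step := hf ((σ ^ (-(i : ℤ) - 1)) x)
    rw [← mul_apply, ← zpow_one_add, add_sub_cancel] at step
    exact ih.trans step.symm

theorem SameCycle.apply_eq_of_forall {f : α → β} (hf : ∀ z, f (σ z) = f z)
    (h : σ.SameCycle x y) : f x = f y :=
  sameCycle_one.mp <| h.map_of_forall (τ := 1) fun z => sameCycle_one.mpr (hf z).symm

end Equiv.Perm

theorem cycleCount_eq_card {n : ℕ} {β : Type*} (σ : Perm (Fin n)) (g : Fin n → β)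
    (hg : Function.Surjective g) (h : ∀ x y, σ.SameCycle x y ↔ g x = g y) :
    cycleCount σ = Nat.card β := by
  have hrel : ∀ x y, MulAction.orbitRel (Subgroup.zpowers σ) (Fin n) x y ↔ Setoid.ker g x y := by
    intro x y
    rw [Setoid.ker_def, ← h, MulAction.orbitRel_apply, MulAction.mem_orbit_iff, sameCycle_comm]
    simp [SameCycle, Subgroup.smul_def]
  exact Nat.card_congr ((Quotient.congrRight hrel).trans (Setoid.quotientKerEquivOfSurjective g hg))

theorem cycleCount_eq_card_quotient {n : ℕ} (σ : Perm (Fin n)) :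
    cycleCount σ = Nat.card (Quotient (SameCycle.setoid σ)) :=
  cycleCount_eq_card σ _ Quotient.mk_surjective fun _ _ =>
    (Quotient.eq (r := SameCycle.setoid σ)).symm

section decomposeFin

variable {n : ℕ} (e : Perm (Fin n))

theorem decomposeFin_symm_zero_apply_succ (i : Fin n) :
    decomposeFin.symm (0, e) i.succ = (e i).succ := by
  simp [decomposeFin_symm_apply_succ]

theorem decomposeFin_symm_succ_apply_succ (q i : Fin n) :
    decomposeFin.symm (q.succ, e) i.succ = if e i = q then 0 else (e i).succ := by
  rw [decomposeFin_symm_apply_succ, swap_apply_def, if_neg (Fin.succ_ne_zero _)]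
  simp only [Fin.succ_inj]

theorem cycleCount_decomposeFin_symm_zero :
    cycleCount (decomposeFin.symm (0, e)) = cycleCount e + 1 := by
  set σ := decomposeFin.symm (0, e)
  let g : Fin (n + 1) → Option (Quotient (SameCycle.setoid e)) :=
    Fin.cases none fun i => some ⟦i⟧
  have hσ : ∀ i : Fin n, σ i.succ = (e i).succ := decomposeFin_symm_zero_apply_succ e
  have hg : Function.Surjective g := by
    rintro (_ | c)
    · exact ⟨0, rfl⟩
    · exact c.inductionOn fun i => ⟨i.succ, rfl⟩
  rw [cycleCount_eq_card_quotient e, ← Finite.card_option]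
  refine cycleCount_eq_card σ g hg fun x y => ⟨fun hxy => hxy.apply_eq_of_forall fun z => ?_, ?_⟩
  · cases z using Fin.cases with
    | zero => simp [σ, decomposeFin_symm_apply_zero]
    | succ i => simpa [g, hσ] using Quotient.sound (sameCycle_apply_left.mpr .rfl)
  · cases x using Fin.cases <;> cases y using Fin.cases <;> simp only [g, Fin.cases_zero,
      Fin.cases_succ, reduceCtorEq, Option.some.injEq, Quotient.eq, false_imp_iff]
    case zero.zero => exact fun _ => .rfl
    case succ.succ i j =>
      exact fun hij => hij.map_of_forall fun z => hσ z ▸ sameCycle_apply_right.mpr .rfl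

theorem cycleCount_decomposeFin_symm_succ (q : Fin n) :
    cycleCount (decomposeFin.symm (q.succ, e)) = cycleCount e := by
  set σ := decomposeFin.symm (q.succ, e)
  let p : Fin (n + 1) → Fin n := Fin.cases q id
  let g : Fin (n + 1) → Quotient (SameCycle.setoid e) := fun x => ⟦p x⟧
  have hσ0 : σ 0 = q.succ := decomposeFin_symm_apply_zero _ e
  have hσ : ∀ i : Fin n, σ i.succ = if e i = q then 0 else (e i).succ :=
    decomposeFin_symm_succ_apply_succ e q
  have hpσ : ∀ i : Fin n, p (σ i.succ) = e i := fun i => by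
    by_cases hi : e i = q <;> simp [p, hσ, hi]
  -- `σ` is `e` with `0` spliced into the cycle of `q`, just before `q.succ`
  have hstep : ∀ i : Fin n, σ.SameCycle i.succ (e i).succ := fun i => by
    by_cases hi : e i = q
    · have h1 : σ.SameCycle i.succ 0 := ⟨1, by simp [hσ, hi]⟩
      exact h1.trans ⟨1, by simp [hσ0, hi]⟩
    · exact ⟨1, by simp [hσ, hi]⟩
  have hsucc_p : ∀ x, σ.SameCycle x (p x).succ := fun x => by
    cases x using Fin.cases with
    | zero => exact ⟨1, by simp [hσ0, p]⟩
    | succ i => exact .rfl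
  have hg : Function.Surjective g := fun c => c.inductionOn fun i => ⟨i.succ, rfl⟩
  rw [cycleCount_eq_card_quotient e]
  refine cycleCount_eq_card σ g hg fun x y => ⟨fun hxy => hxy.apply_eq_of_forall fun z => ?_,
    fun hxy => ?_⟩
  · cases z using Fin.cases with
    | zero => simp [g, p, hσ0]
    | succ i => exact Quotient.sound ((hpσ i).symm ▸ sameCycle_apply_left.mpr .rfl)
  · have hxy' : e.SameCycle (p x) (p y) := Quotient.exact hxy
    exact (hsucc_p x).trans ((hxy'.map_of_forall hstep).trans (hsucc_p y).symm)

end decomposeFin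

theorem stirling1_eq_sum (n k : ℕ) :
    stirling1 n k = ∑ σ : Perm (Fin n), if cycleCount σ = k then 1 else 0 := by
  rw [stirling1, Nat.card_eq_fintype_card, Fintype.card_subtype, card_filter]

theorem stirling1_succ_succ (n k : ℕ) :
    stirling1 (n + 1) (k + 1) = n * stirling1 n (k + 1) + stirling1 n k := by
  simp only [stirling1_eq_sum, ← decomposeFin.symm.sum_comp, Fintype.sum_prod_type,
    Fin.sum_univ_succ (n := n), cycleCount_decomposeFin_symm_zero,
    cycleCount_decomposeFin_symm_succ, add_left_inj, sum_const, card_univ, Fintype.card_fin,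
    smul_eq_mul]
  ring

theorem cycleCount_eq_zero (σ : Perm (Fin 0)) : cycleCount σ = 0 :=
  (cycleCount_eq_card σ id Function.surjective_id fun x => x.elim0).trans Nat.card_of_isEmpty

theorem cycleCount_pos {n : ℕ} (σ : Perm (Fin (n + 1))) : 0 < cycleCount σ := by
  rw [cycleCount_eq_card_quotient]
  have : Nonempty (Quotient (SameCycle.setoid σ)) := ⟨⟦0⟧⟩
  exact Nat.card_pos

theorem stirling1_eq_stirlingFirst (n k : ℕ) : stirling1 n k = Nat.stirlingFirst n k := by
  induction n generalizing k with
  | zero => cases k <;> simp [stirling1_eq_sum, cycleCount_eq_zero]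
  | succ n ih =>
    cases k with
    | zero => simp [stirling1_eq_sum, (cycleCount_pos _).ne']
    | succ k => rw [stirling1_succ_succ, Nat.stirlingFirst_succ_succ, ih, ih]

section BinomialConvolution

variable {A : Type*}

def binomialConvolution [Semiring A] (u v : ℕ → A) (n : ℕ) : A :=
  ∑ i ∈ range (n + 1), (n.choose i : A) * (u i * v (n - i))

theorem binomialConvolution_succ [Semiring A] (u v : ℕ → A) (n : ℕ) :
    binomialConvolution u v (n + 1) =
      binomialConvolution u (fun j => v (j + 1)) n +
        binomialConvolution (fun i => u (i + 1)) v n := by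
  rw [binomialConvolution, sum_choose_succ_mul (fun i j => u i * v j)]
  congr 1
  refine sum_congr rfl fun i hi => ?_
  rw [Nat.sub_add_comm (mem_range_succ_iff.mp hi)]

theorem map_binomialConvolution {B : Type*} [Semiring A] [Semiring B] (f : A →+* B)
    (u v : ℕ → A) (n : ℕ) :
    f (binomialConvolution u v n) =
      binomialConvolution (fun i => f (u i)) (fun j => f (v j)) n := by
  simp [binomialConvolution]

variable {R : Type*} [CommSemiring R] [CommRing A] [Algebra R A] (D : Derivation R A A)

theorem binomialConvolution_succ_of_recurrence {u v : ℕ → A} {c d : A}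
    (hu : ∀ j, u (j + 1) = (j + c) * u j - D (u j))
    (hv : ∀ j, v (j + 1) = (j + d) * v j - D (v j)) (n : ℕ) :
    binomialConvolution u v (n + 1) =
      (n + c + d) * binomialConvolution u v n - D (binomialConvolution u v n) := by
  rw [binomialConvolution_succ]
  simp only [binomialConvolution, hu, hv, map_sum, mul_sum,
    ← sum_add_distrib, ← sum_sub_distrib]
  refine sum_congr rfl fun i hi => ?_
  have hcast : ((n - i : ℕ) : A) = n - i := Nat.cast_sub (mem_range_succ_iff.mp hi)
  rw [Derivation.leibniz, Derivation.leibniz, D.map_natCast, hcast]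
  simp only [smul_eq_mul]
  ring

theorem add_binomialConvolution_self_of_recurrence {ψ : ℕ → A}
    (hψ : ∀ j, ψ (j + 1) = (j + 1) * ψ j - D (ψ j)) (h0 : D (ψ 0) = ψ 0 ^ 2) (n : ℕ) :
    ψ (n + 1) + binomialConvolution ψ ψ n = binomialConvolution (fun j => (j ! : A)) ψ n := by
  have hfact : ∀ j, (((j + 1)! : ℕ) : A) = (j + 1) * (j ! : A) - D (j ! : A) := fun j => by
    rw [D.map_natCast, sub_zero, Nat.factorial_succ, Nat.cast_mul, Nat.cast_succ]
  induction n with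
  | zero =>
    simp only [binomialConvolution, zero_add, range_one, sum_singleton, Nat.choose_self,
      Nat.cast_one, one_mul, Nat.sub_self, Nat.factorial_zero, hψ 0, h0, Nat.cast_zero]
    ring
  | succ n ih =>
    rw [binomialConvolution_succ_of_recurrence D hψ hψ,
      binomialConvolution_succ_of_recurrence D hfact hψ, hψ (n + 1),
      eq_sub_of_add_eq ih, map_sub]
    push_cast
    ring

end BinomialConvolution

theorem Finset.sum_Icc_one_eq_sum_range {M : Type*} [AddCommMonoid M] (f : ℕ → M) (n : ℕ) :
    ∑ k ∈ Icc 1 n, f k = ∑ i ∈ range n, f (i + 1) := by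
  rw [range_eq_Ico, sum_Ico_add' f, zero_add, Ico_add_one_right_eq_Icc]

theorem a_succ (n : ℕ) :
    a (n + 1) = ∑ k ∈ range (n + 1), (-1) ^ k * (k ! : ℤ) * Nat.stirlingFirst (n + 1) (k + 1) := by
  simp [a, sum_Icc_one_eq_sum_range, stirling1_eq_stirlingFirst]

open Polynomial

noncomputable def aPoly : ℕ → ℤ[X]
  | 0 => X
  | n + 1 => ((n : ℤ[X]) + 1) * aPoly n - X ^ 2 * derivative (aPoly n)

theorem coeff_aPoly_zero (n : ℕ) : (aPoly n).coeff 0 = 0 := by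
  induction n with
  | zero => simp [aPoly]
  | succ n ih =>
    rw [aPoly, coeff_sub, ← Nat.cast_succ, coeff_natCast_mul, ih, coeff_X_pow_mul']
    simp

theorem coeff_aPoly_succ (n k : ℕ) :
    (aPoly n).coeff (k + 1) = (-1) ^ k * (k ! : ℤ) * Nat.stirlingFirst (n + 1) (k + 1) := by
  induction n generalizing k with
  | zero =>
    cases k <;> simp [aPoly, coeff_X, Nat.stirlingFirst_self, Nat.stirlingFirst_eq_zero_of_lt]
  | succ n ih =>
    rw [aPoly, ← Nat.cast_succ, coeff_sub, coeff_natCast_mul, coeff_X_pow_mul', ih,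
      Nat.stirlingFirst_succ_succ (n + 1)]
    cases k with
    | zero => simp
    | succ k =>
      rw [if_pos (by omega), (by omega : k + 1 + 1 - 2 = k), coeff_derivative, ih,
        Nat.factorial_succ]
      push_cast
      ring

theorem natDegree_aPoly_lt (n : ℕ) : (aPoly n).natDegree < n + 2 := by
  refine Nat.lt_succ_of_le (natDegree_le_iff_coeff_eq_zero.mpr fun m hm => ?_)
  obtain ⟨k, rfl⟩ : ∃ k, m = k + 1 := ⟨m - 1, by omega⟩
  rw [coeff_aPoly_succ, Nat.stirlingFirst_eq_zero_of_lt (by omega), Nat.cast_zero, mul_zero]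

theorem eval_one_aPoly (n : ℕ) : (aPoly n).eval 1 = a (n + 1) := by
  simp [eval_eq_sum_range' (natDegree_aPoly_lt n), sum_range_succ' _ (n + 1), coeff_aPoly_zero,
    coeff_aPoly_succ, a_succ]

theorem aPoly_add_binomialConvolution (n : ℕ) :
    aPoly (n + 1) + binomialConvolution aPoly aPoly n =
      binomialConvolution (fun j => (j ! : ℤ[X])) aPoly n :=
  add_binomialConvolution_self_of_recurrence (mkDerivation ℤ (X ^ 2 : ℤ[X]))
    (fun j => by rw [aPoly, mkDerivation_apply, smul_eq_mul, mul_comm (derivative _)])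
    (by simp [aPoly, mkDerivation_apply]) n

theorem a_add_binomialConvolution (n : ℕ) :
    a (n + 2) + binomialConvolution (fun i => a (i + 1)) (fun i => a (i + 1)) n =
      binomialConvolution (fun j => (j ! : ℤ)) (fun i => a (i + 1)) n := by
  have h := congrArg (evalRingHom (1 : ℤ)) (aPoly_add_binomialConvolution n)
  rw [map_add, map_binomialConvolution, map_binomialConvolution] at h
  simpa [eval_one_aPoly] using h

/-- The recurrence `a_n = ∑_{k=1}^{n-1} C(n-2,k-1) ((k-1)! - a_k) a_{n-k}` for `n ≥ 2`. -/
theorem stmt10 (n : ℕ) (hn : 2 ≤ n) :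
    a n = ∑ k ∈ Finset.Icc 1 (n - 1),
        ((n - 2).choose (k - 1) : ℤ) * ((Nat.factorial (k - 1) : ℤ) - a k) * a (n - k) := by
  obtain ⟨m, rfl⟩ : ∃ m, n = m + 2 := ⟨n - 2, by omega⟩
  rw [eq_sub_of_add_eq (a_add_binomialConvolution m), binomialConvolution, binomialConvolution,
    ← sum_sub_distrib, sum_Icc_one_eq_sum_range]
  refine sum_congr rfl fun i hi => ?_
  rw [show m + 2 - (i + 1) = m - i + 1 by grind]
  simp only [Nat.add_sub_cancel]
  ring
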